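/- arXiv:1506.06317 — 3 statements merged into one kernel-verified Lean document; each statement's English description precedes it below -/
import Mathlib

section
/- Let N ≥ 2 be an integer. The function x ↦ B₂(⟨x⟩), where B₂(x) = x² - x + 1/6 and ⟨x⟩ is the fractional part, satisfies: for rational numbers u, v with denominator dividing N, B₂(⟨u⟩) = B₂(⟨v⟩) if and only if u ≡ v (mod ℤ) or u ≡ -v (mod ℤ). -/
/-- The second Bernoulli polynomial. -/
noncomputable def B2 (x : ℚ) : ℚ := x ^ 2 - x + 1 / 6

theorem stmt_1 (N : ℕ) (hN : 2 ≤ N) (u v : ℚ)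
    (hu : ∃ a : ℤ, u = a / N) (hv : ∃ b : ℤ, v = b / N) :
    B2 (Int.fract u) = B2 (Int.fract v) ↔
      (∃ m : ℤ, u - v = m) ∨ (∃ m : ℤ, u + v = m) := by
  have hfu0 := Int.fract_nonneg u
  have hfu1 := Int.fract_lt_one u
  have hfv0 := Int.fract_nonneg v
  have hfv1 := Int.fract_lt_one v
  constructor
  · intro h
    simp only [B2] at h
    have key : (Int.fract u - Int.fract v) * (Int.fract u + Int.fract v - 1) = 0 := by
      linear_combination h
    have hu' := Int.self_sub_fract u
    have hv' := Int.self_sub_fract v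
    rcases mul_eq_zero.mp key with h1 | h2
    · left
      refine ⟨⌊u⌋ - ⌊v⌋, ?_⟩
      push_cast
      linarith
    · right
      refine ⟨⌊u⌋ + ⌊v⌋ + 1, ?_⟩
      push_cast
      linarith
  · rintro (⟨m, hm⟩ | ⟨m, hm⟩)
    · have : Int.fract u = Int.fract v := by
        have h' : u = v + m := by linarith
        rw [h', Int.fract_add_intCast]
      rw [this]
    · have hu' := Int.self_sub_fract u
      have hv' := Int.self_sub_fract v
      have hk : Int.fract u + Int.fract v = ((m - ⌊u⌋ - ⌊v⌋ : ℤ) : ℚ) := by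
        push_cast; linarith
      have h0' : (0:ℤ) ≤ m - ⌊u⌋ - ⌊v⌋ := by
        have : (0:ℚ) ≤ ((m - ⌊u⌋ - ⌊v⌋ : ℤ) : ℚ) := by rw [← hk]; linarith
        exact_mod_cast this
      have h2' : m - ⌊u⌋ - ⌊v⌋ < 2 := by
        have : ((m - ⌊u⌋ - ⌊v⌋ : ℤ) : ℚ) < 2 := by rw [← hk]; linarith
        exact_mod_cast this
      have hk01 : m - ⌊u⌋ - ⌊v⌋ = 0 ∨ m - ⌊u⌋ - ⌊v⌋ = 1 := by omega
      rcases hk01 with hc | hc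
      · rw [hc] at hk; push_cast at hk
        have hu0 : Int.fract u = 0 := by linarith
        have hv0 : Int.fract v = 0 := by linarith
        rw [hu0, hv0]
      · rw [hc] at hk; push_cast at hk
        have : Int.fract v = 1 - Int.fract u := by linarith
        rw [this]; simp only [B2]; ring
end

section
/- Let N ≥ 2 and let a, c be integers with gcd-condition coming from a row of an SL₂(ℤ) matrix. Define B₂(x) = x² - x + 1/6 and ⟨x⟩ the fractional part. If 6N·B₂(⟨a/N⟩) + 12N·B₂(⟨c/N⟩) = 6N·B₂(1/N) + 12N·B₂(0), then c ≡ 0 (mod N) and a ≡ ±1 (mod N). -/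
/-! Writing `x = ⟨a/N⟩ N` and `y = ⟨c/N⟩ N`, the identity `6N B₂(x/N) = N - 6x(N - x)/N` turns the
hypothesis into `x(N - x) + 2y(N - y) = N - 1` for residues `0 ≤ x, y < N`. A nonzero residue `y`
has `y(N - y) ≥ N - 1`, which is too large, so `y = 0`; then `(x - 1)(N - 1 - x) = 0`. -/

lemma six_mul_B2_div {N : ℚ} (hN : N ≠ 0) (x : ℚ) :
    6 * N * B2 (x / N) = N - 6 * (x * (N - x)) / N := by
  unfold B2
  field_simp
  ring

lemma mul_sub_add_two_mul_mul_sub_eq_of_B2 {N : ℚ} (hN : N ≠ 0) {x y : ℚ}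
    (h : 6 * N * B2 (x / N) + 12 * N * B2 (y / N) = 6 * N * B2 (1 / N) + 12 * N * B2 0) :
    x * (N - x) + 2 * (y * (N - y)) = N - 1 := by
  have h12 (z : ℚ) : 12 * N * B2 (z / N) = 2 * (6 * N * B2 (z / N)) := by ring
  rw [← zero_div N, h12, h12, six_mul_B2_div hN, six_mul_B2_div hN, six_mul_B2_div hN,
    six_mul_B2_div hN] at h
  field_simp at h
  linarith

lemma Int.sub_one_le_mul_sub {N y : ℤ} (hy : 0 < y) (hyN : y < N) : N - 1 ≤ y * (N - y) := by
  nlinarith [mul_nonneg (sub_nonneg.2 hy) (sub_nonneg.2 (Int.le_sub_one_of_lt hyN))]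

lemma Int.eq_zero_and_eq_one_or_of_mul_sub_add_two_mul_mul_sub_eq {N x y : ℤ} (hN : 2 ≤ N)
    (hx : 0 ≤ x) (hxN : x < N) (hy : 0 ≤ y) (hyN : y < N)
    (h : x * (N - x) + 2 * (y * (N - y)) = N - 1) :
    y = 0 ∧ (x = 1 ∨ x = N - 1) := by
  have hy0 : y = 0 := by
    by_contra hy0
    have := Int.sub_one_le_mul_sub (lt_of_le_of_ne hy (Ne.symm hy0)) hyN
    nlinarith [mul_nonneg hx (sub_nonneg.2 hxN.le)]
  refine ⟨hy0, ?_⟩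
  subst hy0
  have hfac : (x - 1) * (N - 1 - x) = 0 := by linear_combination h
  rcases mul_eq_zero.1 hfac with hx1 | hx1
  · exact Or.inl (by linarith)
  · exact Or.inr (by linarith)

theorem stmt_11_general (N : ℕ) (hN : 2 ≤ N) (a c : ℤ)
    (h : 6 * N * B2 (Int.fract ((a : ℚ) / N)) + 12 * N * B2 (Int.fract ((c : ℚ) / N)) =
         6 * N * B2 (1 / N) + 12 * N * B2 0) :
    c ≡ 0 [ZMOD (N : ℤ)] ∧ (a ≡ 1 [ZMOD (N : ℤ)] ∨ a ≡ -1 [ZMOD (N : ℤ)]) := by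
  have hN' : (2 : ℤ) ≤ N := by exact_mod_cast hN
  have hN0 : (0 : ℤ) < N := by omega
  rw [Int.fract_div_intCast_eq_div_intCast_mod, Int.fract_div_intCast_eq_div_intCast_mod] at h
  have hres := mul_sub_add_two_mul_mul_sub_eq_of_B2 (by positivity) h
  obtain ⟨hc, ha⟩ := Int.eq_zero_and_eq_one_or_of_mul_sub_add_two_mul_mul_sub_eq hN'
    (Int.emod_nonneg a hN0.ne') (Int.emod_lt_of_pos a hN0)
    (Int.emod_nonneg c hN0.ne') (Int.emod_lt_of_pos c hN0) (by exact_mod_cast hres)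
  refine ⟨Int.modEq_zero_iff_dvd.2 (Int.dvd_of_emod_eq_zero hc), ?_⟩
  rcases ha with ha | ha
  · exact Or.inl ((Int.mod_modEq a N).symm.trans (by rw [ha]))
  · exact Or.inr ((Int.mod_modEq a N).symm.trans (ha ▸ Int.modEq_iff_dvd.2 ⟨-1, by ring⟩))

theorem stmt_11 (N : ℕ) (hN : 2 ≤ N) (a c : ℤ) (hac : IsCoprime a c)
    (h : 6 * N * B2 (Int.fract ((a : ℚ) / N)) + 12 * N * B2 (Int.fract ((c : ℚ) / N)) =
         6 * N * B2 (1 / N) + 12 * N * B2 0) :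
    c ≡ 0 [ZMOD (N : ℤ)] ∧ (a ≡ 1 [ZMOD (N : ℤ)] ∨ a ≡ -1 [ZMOD (N : ℤ)]) :=
  stmt_11_general N hN a c h
end

section
/- Let N be an odd integer and a an integer with 1 ≤ a ≤ N/2, a ≢ ±1 (mod N), a² ≡ ±1 (mod N). Let b₁, b₂ ∈ (1/N)ℤ satisfy min(⟨±b₁⟩, ⟨±a·b₁⟩) = 1/N and min(⟨±b₂⟩, ⟨±a·b₂⟩) = 0, where ⟨±x⟩ = min(⟨x⟩, ⟨-x⟩). Then b₂ ≡ 0 (mod ℤ) and either b₁ ≡ ±1/N (mod ℤ) or b₁ ≡ ±a/N (mod ℤ). -/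
/-- `⟨±x⟩ = min(⟨x⟩, ⟨-x⟩)`, the distance from `x` to the nearest integer. -/
noncomputable def fractpm (x : ℚ) : ℚ := min (Int.fract x) (Int.fract (-x))

lemma fractpm_cases {x c : ℚ} (h : fractpm x = c) :
    (∃ m : ℤ, x - c = m) ∨ (∃ m : ℤ, x + c = m) := by
  rcases min_eq_iff.mp h with ⟨h, -⟩ | ⟨h, -⟩
  · exact Or.inl ⟨⌊x⌋, by rw [← h, Int.self_sub_fract]⟩
  · refine Or.inr ⟨-⌊-x⌋, ?_⟩
    have h2 := Int.self_sub_fract (-x)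
    rw [h] at h2
    push_cast
    linarith

lemma key_dvd {N a k c e : ℤ} (he : e = 1 ∨ e = -1) (h1 : N ∣ a^2 - e) (h2 : N ∣ a*k - c) :
    N ∣ k - e*c*a := by
  have h3 : N ∣ a*(a*k - c) - k*(a^2 - e) := (h2.mul_left a).sub (h1.mul_left k)
  have h4 : a*(a*k - c) - k*(a^2 - e) = e*k - a*c := by ring
  rw [h4] at h3
  have h5 := h3.mul_left e
  have h6 : e*(e*k - a*c) = k - e*c*a := by rcases he with rfl | rfl <;> ring
  rwa [h6] at h5

lemma final_div {N : ℕ} (hN : (N:ℚ) ≠ 0) {b : ℚ} {k d : ℤ} (hk : (N : ℚ) * b = k)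
    (h : (N:ℤ) ∣ k - d) : ∃ m : ℤ, b - d/N = m := by
  obtain ⟨t, ht⟩ := h
  refine ⟨t, ?_⟩
  have htQ : (k : ℚ) - d = N*t := by exact_mod_cast ht
  field_simp
  linarith

theorem stmt_13 (N : ℕ) (hodd : Odd N) (a : ℤ)
    (ha1 : 1 ≤ a) (ha2 : 2 * a ≤ (N : ℤ))
    (hane : ¬(a ≡ 1 [ZMOD (N : ℤ)] ∨ a ≡ -1 [ZMOD (N : ℤ)]))
    (hasq : a ^ 2 ≡ 1 [ZMOD (N : ℤ)] ∨ a ^ 2 ≡ -1 [ZMOD (N : ℤ)])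
    (b₁ b₂ : ℚ)
    (hden₁ : ∃ k : ℤ, (N : ℚ) * b₁ = k) (hden₂ : ∃ k : ℤ, (N : ℚ) * b₂ = k)
    (hb₁ : min (fractpm b₁) (fractpm (a * b₁)) = 1 / N)
    (hb₂ : min (fractpm b₂) (fractpm (a * b₂)) = 0) :
    (∃ m : ℤ, b₂ = m) ∧
    (((∃ m : ℤ, b₁ - 1 / N = m) ∨ (∃ m : ℤ, b₁ + 1 / N = m)) ∨
     ((∃ m : ℤ, b₁ - a / N = m) ∨ (∃ m : ℤ, b₁ + a / N = m))) := by
  have hN0 : 0 < N := by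
    rcases Nat.eq_zero_or_pos N with h | h
    · subst h; exact absurd hodd (by decide)
    · exact h
  have hNQ : (N : ℚ) ≠ 0 := Nat.cast_ne_zero.mpr hN0.ne'
  obtain ⟨k₁, hk₁⟩ := hden₁
  obtain ⟨k₂, hk₂⟩ := hden₂
  -- extract e : ±1 with N ∣ a^2 - e
  obtain ⟨e, he, hdvd⟩ : ∃ e : ℤ, (e = 1 ∨ e = -1) ∧ (N : ℤ) ∣ a^2 - e := by
    rcases hasq with h | h
    · exact ⟨1, Or.inl rfl, by simpa [neg_sub] using (Int.ModEq.dvd h).neg_right⟩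
    · exact ⟨-1, Or.inr rfl, by simpa [neg_sub] using (Int.ModEq.dvd h).neg_right⟩
  -- generic step: if a * b = c/N + m for some integer m, with c = ±1 or 0, get congruence
  have mulN : ∀ (b : ℚ) (k : ℤ), (N:ℚ) * b = k → ∀ (c m : ℤ), a * b - c/N = m →
      (N:ℤ) ∣ a*k - c := by
    intro b k hk c m h
    have hQ : (a:ℚ)*k - c = m*N := by
      have : (a:ℚ) * ((N:ℚ)*b) = a * k := by rw [hk]
      field_simp at h
      push_cast at this ⊢
      nlinarith [h, this]
    have hZ : a*k - c = m*N := by exact_mod_cast hQ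
    exact ⟨m, by linarith⟩
  constructor
  · -- b₂ part
    rcases min_eq_iff.mp hb₂ with ⟨h, -⟩ | ⟨h, -⟩
    · rcases fractpm_cases h with ⟨m, hm⟩ | ⟨m, hm⟩
      · exact ⟨m, by linarith⟩
      · exact ⟨m, by linarith⟩
    · -- fractpm (a*b₂) = 0
      have hab : ∃ m : ℤ, a * b₂ - 0/N = m := by
        rcases fractpm_cases h with ⟨m, hm⟩ | ⟨m, hm⟩ <;>
          exact ⟨m, by simpa using hm⟩
      obtain ⟨m, hm⟩ := hab
      have h1 : (N:ℤ) ∣ a*k₂ - 0 := mulN b₂ k₂ hk₂ 0 m hm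
      have h2 : (N:ℤ) ∣ k₂ - e*0*a := key_dvd he hdvd h1
      obtain ⟨m', hm'⟩ := final_div hNQ hk₂ (by simpa using h2 : (N:ℤ) ∣ k₂ - 0)
      exact ⟨m', by simpa using hm'⟩
  · -- b₁ part
    rcases min_eq_iff.mp hb₁ with ⟨h, -⟩ | ⟨h, -⟩
    · exact Or.inl (fractpm_cases h)
    · -- fractpm (a*b₁) = 1/N
      refine Or.inr ?_
      rcases fractpm_cases h with ⟨m, hm⟩ | ⟨m, hm⟩
      · -- a*b₁ - 1/N = m : c = 1
        have h1 : (N:ℤ) ∣ a*k₁ - 1 := mulN b₁ k₁ hk₁ 1 m (by push_cast; linarith)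
        have h2 : (N:ℤ) ∣ k₁ - e*1*a := key_dvd he hdvd h1
        rcases he with rfl | rfl
        · obtain ⟨m', hm'⟩ := final_div hNQ hk₁ (by simpa using h2 : (N:ℤ) ∣ k₁ - a)
          exact Or.inl ⟨m', by exact_mod_cast hm'⟩
        · have h3 : (N:ℤ) ∣ k₁ - (-a) := by
            rw [show k₁ - (-a) = k₁ - (-1)*1*a from by ring]; exact h2
          obtain ⟨m', hm'⟩ := final_div hNQ hk₁ h3
          refine Or.inr ⟨m', ?_⟩
          rw [← hm']; push_cast; ring
      · -- a*b₁ + 1/N = m : c = -1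
        have h1 : (N:ℤ) ∣ a*k₁ - (-1) := mulN b₁ k₁ hk₁ (-1) m (by
          push_cast; rw [neg_div]; linarith)
        have h2 : (N:ℤ) ∣ k₁ - e*(-1)*a := key_dvd he hdvd h1
        rcases he with rfl | rfl
        · have h3 : (N:ℤ) ∣ k₁ - (-a) := by
            rw [show k₁ - (-a) = k₁ - 1*(-1)*a from by ring]; exact h2
          obtain ⟨m', hm'⟩ := final_div hNQ hk₁ h3
          refine Or.inr ⟨m', ?_⟩
          rw [← hm']; push_cast; ring
        · have h3 : (N:ℤ) ∣ k₁ - a := by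
            rw [show k₁ - a = k₁ - (-1)*(-1)*a from by ring]; exact h2
          obtain ⟨m', hm'⟩ := final_div hNQ hk₁ h3
          exact Or.inl ⟨m', by exact_mod_cast hm'⟩
end
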